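/- arXiv:2301.09526 — 4 statements merged into one kernel-verified Lean document; each statement's English description precedes it below -/
import Mathlib

section
/- For every constant c > 0 there exists a polynomial F in two complex variables z₁, z₂ such that ‖(z₁ ∂/∂z₁)² F‖_{A(D²)} ≤ 1 and ‖(z₂ ∂/∂z₂)² F‖_{A(D²)} ≤ 1, but ‖z₂ ∂/∂z₂ (z₁ ∂/∂z₁) F‖_{A(D²)} ≥ c, where (z₁ ∂/∂z₁)G denotes the function (z₁,z₂) ↦ z₁ · ∂G/∂z₁(z₁,z₂), similarly for z₂, and ‖G‖_{A(D²)} denotes the supremum of |G| over the closed unit bi-disc {(z₁,z₂) ∈ ℂ² : |z₁| ≤ 1, |z₂| ≤ 1}. -/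
/-!
Take `F = ∑_{s<N} L⁻⁴ P_L(z₁) P_L(z₂)` over the dyadic scales `L = 2^s`, where
`P_L(z) = ∑_{j<L} z^j - ∑_{L≤j<2L} z^j = (1 - z^L)² / (1 - z)`. At `(1, 1)` every block of
`z₂∂₂ z₁∂₁ F` equals `L⁻⁴ (L²)² = 1`, so the mixed derivative has sup norm at least `N`.
On the other hand `|(z∂)² P_L| ≤ 8L³` while `|P_L(w)| ≤ min (L² r, 4 / r)` with `r = |1 - w|`,
so the `s`-th block of `(z₁∂₁)² F` is at most `32 min (L r, 1 / (L r))`, and these bounds are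
summable over dyadic `L` uniformly in `r` and `N`. Scaling `F` by a constant finishes the proof.
-/

open MvPolynomial

/-- The sup norm of (the evaluation of) a polynomial over the closed unit bi-disc. -/
noncomputable def ADnorm (G : MvPolynomial (Fin 2) ℂ) : ℝ :=
  sSup ((fun z : ℂ × ℂ => ‖MvPolynomial.eval ![z.1, z.2] G‖) ''
    {z : ℂ × ℂ | ‖z.1‖ ≤ 1 ∧ ‖z.2‖ ≤ 1})

/-- The Euler derivative `z₁ ∂/∂z₁` acting on polynomials. -/
noncomputable def euler1 (G : MvPolynomial (Fin 2) ℂ) : MvPolynomial (Fin 2) ℂ :=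
  X 0 * pderiv 0 G

/-- The Euler derivative `z₂ ∂/∂z₂` acting on polynomials. -/
noncomputable def euler2 (G : MvPolynomial (Fin 2) ℂ) : MvPolynomial (Fin 2) ℂ :=
  X 1 * pderiv 1 G

open Finset

section SupNorm

lemma ADnorm_le {G : MvPolynomial (Fin 2) ℂ} {B : ℝ} (hB : 0 ≤ B)
    (h : ∀ z w : ℂ, ‖z‖ ≤ 1 → ‖w‖ ≤ 1 → ‖eval ![z, w] G‖ ≤ B) : ADnorm G ≤ B :=
  Real.sSup_le (by rintro _ ⟨⟨z, w⟩, ⟨hz, hw⟩, rfl⟩; exact h z w hz hw) hB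

lemma norm_eval_le_ADnorm (G : MvPolynomial (Fin 2) ℂ) {z w : ℂ} (hz : ‖z‖ ≤ 1)
    (hw : ‖w‖ ≤ 1) : ‖eval ![z, w] G‖ ≤ ADnorm G := by
  have hK : IsCompact {z : ℂ × ℂ | ‖z.1‖ ≤ 1 ∧ ‖z.2‖ ≤ 1} := by
    convert (isCompact_closedBall (0 : ℂ) 1).prod (isCompact_closedBall (0 : ℂ) 1) using 1
    ext; simp
  have hcont : Continuous fun z : ℂ × ℂ => ‖eval ![z.1, z.2] G‖ :=
    ((continuous_eval G).comp (by fun_prop)).norm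
  exact le_csSup (hK.bddAbove_image hcont.continuousOn) ⟨(z, w), ⟨hz, hw⟩, rfl⟩

lemma ADnorm_C_mul (a : ℂ) (G : MvPolynomial (Fin 2) ℂ) :
    ADnorm (C a * G) = ‖a‖ * ADnorm G := by
  simp only [ADnorm, map_mul, eval_C, norm_mul]
  rw [← smul_eq_mul, ← Real.sSup_smul_of_nonneg (norm_nonneg a), ← Set.image_smul,
    Set.image_image]
  rfl

end SupNorm

section Euler

lemma euler1_C_mul (a : ℂ) (G : MvPolynomial (Fin 2) ℂ) :
    euler1 (C a * G) = C a * euler1 G := by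
  rw [euler1, euler1, pderiv_C_mul, mul_left_comm]

lemma euler2_C_mul (a : ℂ) (G : MvPolynomial (Fin 2) ℂ) :
    euler2 (C a * G) = C a * euler2 G := by
  rw [euler2, euler2, pderiv_C_mul, mul_left_comm]

lemma euler1_sum {ι : Type*} (t : Finset ι) (f : ι → MvPolynomial (Fin 2) ℂ) :
    euler1 (∑ i ∈ t, f i) = ∑ i ∈ t, euler1 (f i) := by
  rw [euler1, map_sum, mul_sum]; rfl

lemma euler2_sum {ι : Type*} (t : Finset ι) (f : ι → MvPolynomial (Fin 2) ℂ) :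
    euler2 (∑ i ∈ t, f i) = ∑ i ∈ t, euler2 (f i) := by
  rw [euler2, map_sum, mul_sum]; rfl

lemma euler1_C_mul_X_pow_mul_X_pow (a : ℂ) (j k : ℕ) :
    euler1 (C a * X 0 ^ j * X 1 ^ k) = C (j * a) * X 0 ^ j * X 1 ^ k := by
  cases j with
  | zero => simp [euler1]
  | succ n =>
    simp [euler1]
    ring

lemma euler2_C_mul_X_pow_mul_X_pow (a : ℂ) (j k : ℕ) :
    euler2 (C a * X 0 ^ j * X 1 ^ k) = C (k * a) * X 0 ^ j * X 1 ^ k := by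
  cases k with
  | zero => simp [euler2]
  | succ n =>
    simp [euler2]
    ring

end Euler

section SeparablePolynomial

noncomputable def sepPoly (n : ℕ) (a b : ℕ → ℂ) : MvPolynomial (Fin 2) ℂ :=
  ∑ j ∈ range n, ∑ k ∈ range n, C (a j * b k) * X 0 ^ j * X 1 ^ k

lemma euler1_sepPoly (n : ℕ) (a b : ℕ → ℂ) :
    euler1 (sepPoly n a b) = sepPoly n (fun j => j * a j) b := by
  simp only [sepPoly, euler1_sum, euler1_C_mul_X_pow_mul_X_pow, ← mul_assoc]

lemma euler2_sepPoly (n : ℕ) (a b : ℕ → ℂ) :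
    euler2 (sepPoly n a b) = sepPoly n a (fun k => k * b k) := by
  simp only [sepPoly, euler2_sum, euler2_C_mul_X_pow_mul_X_pow, mul_left_comm]

lemma eval_sepPoly (n : ℕ) (a b : ℕ → ℂ) (z w : ℂ) :
    eval ![z, w] (sepPoly n a b) =
      (∑ j ∈ range n, a j * z ^ j) * ∑ k ∈ range n, b k * w ^ k := by
  simp only [sepPoly, map_sum, sum_mul_sum]
  refine sum_congr rfl fun j _ => sum_congr rfl fun k _ => ?_
  simp
  ring

end SeparablePolynomial

section SignedSum

noncomputable def signWeight (L m j : ℕ) : ℂ := (j : ℂ) ^ m * if j < L then 1 else -1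

/-- `(z d/dz)^m P_L`, where `P_L(z) = ∑_{j<L} z^j - ∑_{L≤j<2L} z^j = (1 - z^L)^2 / (1 - z)`. -/
noncomputable def signedSum (L m : ℕ) (z : ℂ) : ℂ :=
  ∑ j ∈ range (2 * L), signWeight L m j * z ^ j

lemma natCast_mul_signWeight (L m : ℕ) :
    (fun j : ℕ => (j : ℂ) * signWeight L m j) = signWeight L (m + 1) := by
  ext j; simp only [signWeight, pow_succ]; ring

lemma norm_signWeight (L m j : ℕ) : ‖signWeight L m j‖ = (j : ℝ) ^ m := by
  simp only [signWeight, norm_mul, norm_pow, Complex.norm_natCast]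
  split_ifs <;> simp

lemma signedSum_eq_sub (L m : ℕ) (z : ℂ) :
    signedSum L m z = ∑ j ∈ range L, (j : ℂ) ^ m * z ^ j
      - ∑ j ∈ range L, ((L + j : ℕ) : ℂ) ^ m * z ^ (L + j) := by
  rw [signedSum, two_mul, sum_range_add, sub_eq_add_neg, ← sum_neg_distrib]
  congr 1 <;> refine sum_congr rfl fun j hj => ?_
  · simp [signWeight, mem_range.mp hj]
  · simp [signWeight]

lemma signedSum_zero (L : ℕ) (z : ℂ) :
    signedSum L 0 z = (1 - z) * (∑ j ∈ range L, z ^ j) ^ 2 := by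
  simp only [signedSum_eq_sub, pow_zero, one_mul, pow_add, ← mul_sum]
  rw [sq, ← mul_assoc, mul_neg_geom_sum]
  ring

lemma signedSum_one_one (L : ℕ) : signedSum L 1 1 = -(L : ℂ) ^ 2 := by
  rw [signedSum_eq_sub, ← sum_sub_distrib]
  simp [sq]

lemma norm_geom_sum_le (L : ℕ) {z : ℂ} (hz : ‖z‖ ≤ 1) : ‖∑ j ∈ range L, z ^ j‖ ≤ L := by
  simpa using norm_sum_le_of_le (range L) fun j _ =>
    (norm_pow z j).trans_le (pow_le_one₀ (norm_nonneg z) hz)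

lemma norm_signedSum_le (L m : ℕ) {z : ℂ} (hz : ‖z‖ ≤ 1) :
    ‖signedSum L m z‖ ≤ (2 * L : ℝ) ^ (m + 1) := by
  have hterm : ∀ j ∈ range (2 * L), ‖signWeight L m j * z ^ j‖ ≤ (2 * L : ℝ) ^ m := by
    intro j hj
    rw [norm_mul, norm_signWeight, norm_pow]
    have hj' : (j : ℝ) ≤ 2 * L := by exact_mod_cast (mem_range.mp hj).le
    calc (j : ℝ) ^ m * ‖z‖ ^ j ≤ (j : ℝ) ^ m * 1 := by
          gcongr; exact pow_le_one₀ (norm_nonneg z) hz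
      _ ≤ (2 * L : ℝ) ^ m := by rw [mul_one]; gcongr
  simpa [signedSum, pow_succ'] using norm_sum_le_of_le _ hterm

lemma norm_signedSum_zero_le (L : ℕ) {z : ℂ} (hz : ‖z‖ ≤ 1) :
    ‖signedSum L 0 z‖ ≤ (L : ℝ) ^ 2 * ‖1 - z‖ := by
  rw [signedSum_zero, norm_mul, norm_pow, mul_comm]
  gcongr
  exact norm_geom_sum_le L hz

lemma norm_signedSum_zero_mul_le (L : ℕ) {z : ℂ} (hz : ‖z‖ ≤ 1) :
    ‖signedSum L 0 z‖ * ‖1 - z‖ ≤ 4 := by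
  have h : signedSum L 0 z * (1 - z) = (1 - z ^ L) ^ 2 := by
    rw [signedSum_zero, ← mul_neg_geom_sum]; ring
  have h2 : ‖1 - z ^ L‖ ≤ 2 := by
    calc ‖1 - z ^ L‖ ≤ ‖(1 : ℂ)‖ + ‖z ^ L‖ := norm_sub_le _ _
      _ ≤ 1 + 1 := by rw [norm_one, norm_pow]; gcongr; exact pow_le_one₀ (norm_nonneg z) hz
      _ = 2 := by norm_num
  calc ‖signedSum L 0 z‖ * ‖1 - z‖ = ‖1 - z ^ L‖ ^ 2 := by rw [← norm_mul, h, norm_pow]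
    _ ≤ 2 ^ 2 := by gcongr
    _ = 4 := by norm_num

end SignedSum

section Dyadic

/-- `x ↦ x / (1 + x)` is bounded and increasing, so these increments telescope along dyadic
scales. -/
lemma le_six_mul_sub_of_le_mul_of_mul_le {a x K : ℝ} (ha : 0 ≤ a) (hx : 0 ≤ x)
    (hax : a ≤ K * x) (hxa : a * x ≤ K) : a ≤ 6 * K * (2 * x / (1 + 2 * x) - x / (1 + x)) := by
  have hsub : 2 * x / (1 + 2 * x) - x / (1 + x) = x / ((1 + 2 * x) * (1 + x)) := by
    field_simp; ring
  rw [hsub, mul_div_assoc', le_div_iff₀ (by positivity)]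
  rcases le_total x 1 with h | h
  · nlinarith [mul_nonneg ha hx, mul_nonneg (mul_nonneg ha hx) hx]
  · nlinarith [mul_nonneg ha hx, mul_nonneg (mul_nonneg ha hx) hx]

lemma sum_le_of_dyadic_bounds {a : ℕ → ℝ} {r K : ℝ} (hr : 0 ≤ r) (ha : ∀ s, 0 ≤ a s)
    (hax : ∀ s, a s ≤ K * (2 ^ s * r)) (hxa : ∀ s, a s * (2 ^ s * r) ≤ K) (N : ℕ) :
    ∑ s ∈ range N, a s ≤ 6 * K := by
  set h : ℕ → ℝ := fun s => 2 ^ s * r / (1 + 2 ^ s * r)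
  have hK : 0 ≤ K := (mul_nonneg (ha 0) (by positivity)).trans (hxa 0)
  calc ∑ s ∈ range N, a s ≤ ∑ s ∈ range N, 6 * K * (h (s + 1) - h s) := by
        refine sum_le_sum fun s _ => ?_
        have := le_six_mul_sub_of_le_mul_of_mul_le (ha s) (by positivity) (hax s) (hxa s)
        simpa [h, pow_succ, mul_assoc, mul_comm, mul_left_comm] using this
    _ = 6 * K * (h N - h 0) := by rw [← mul_sum, sum_range_sub]
    _ ≤ 6 * K * 1 := by
        gcongr
        have h0 : 0 ≤ h 0 := by positivity
        have hN : h N ≤ 1 := div_le_one_of_le₀ (by linarith) (by positivity)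
        linarith
    _ = 6 * K := mul_one _

end Dyadic

section Construction

/-- `(z₁∂₁)^p (z₂∂₂)^q ∑_{s<N} L^{-4} P_L(z₁) P_L(z₂)` with `L = 2^s`. -/
noncomputable def dyadicPoly (N p q : ℕ) : MvPolynomial (Fin 2) ℂ :=
  ∑ s ∈ range N, C (((2 ^ s : ℕ) : ℂ) ^ 4)⁻¹ *
    sepPoly (2 * 2 ^ s) (signWeight (2 ^ s) p) (signWeight (2 ^ s) q)

lemma euler1_dyadicPoly (N p q : ℕ) : euler1 (dyadicPoly N p q) = dyadicPoly N (p + 1) q := by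
  simp only [dyadicPoly, euler1_sum, euler1_C_mul, euler1_sepPoly, natCast_mul_signWeight]

lemma euler2_dyadicPoly (N p q : ℕ) : euler2 (dyadicPoly N p q) = dyadicPoly N p (q + 1) := by
  simp only [dyadicPoly, euler2_sum, euler2_C_mul, euler2_sepPoly, natCast_mul_signWeight]

lemma eval_dyadicPoly (N p q : ℕ) (z w : ℂ) :
    eval ![z, w] (dyadicPoly N p q) = ∑ s ∈ range N,
      (((2 ^ s : ℕ) : ℂ) ^ 4)⁻¹ * (signedSum (2 ^ s) p z * signedSum (2 ^ s) q w) := by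
  simp only [dyadicPoly, map_sum, map_mul, eval_C, eval_sepPoly, signedSum]

lemma eval_dyadicPoly_swap (N p q : ℕ) (z w : ℂ) :
    eval ![z, w] (dyadicPoly N p q) = eval ![w, z] (dyadicPoly N q p) := by
  simp only [eval_dyadicPoly, mul_comm (signedSum _ p _)]

lemma eval_one_one_dyadicPoly_one_one (N : ℕ) : eval ![1, 1] (dyadicPoly N 1 1) = N := by
  have hterm : ∀ L : ℕ, L ≠ 0 → ((L : ℂ) ^ 4)⁻¹ * (signedSum L 1 1 * signedSum L 1 1) = 1 := by
    intro L hL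
    rw [signedSum_one_one]
    field_simp
  rw [eval_dyadicPoly, sum_congr rfl fun s _ => hterm (2 ^ s) (by positivity)]
  simp

variable {L : ℕ} {z w : ℂ}

lemma norm_scaled_signedSum_two_mul_zero_le (hz : ‖z‖ ≤ 1) (hw : ‖w‖ ≤ 1) :
    ‖((L : ℂ) ^ 4)⁻¹ * (signedSum L 2 z * signedSum L 0 w)‖ ≤ 32 * (L * ‖1 - w‖) := by
  rcases eq_or_ne L 0 with rfl | hL
  · simp
  calc ‖((L : ℂ) ^ 4)⁻¹ * (signedSum L 2 z * signedSum L 0 w)‖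
      ≤ ((L : ℝ) ^ 4)⁻¹ * ((2 * L) ^ 3 * ((L : ℝ) ^ 2 * ‖1 - w‖)) := by
        rw [norm_mul, norm_mul, norm_inv, norm_pow, Complex.norm_natCast]
        gcongr
        · exact norm_signedSum_le L 2 hz
        · exact norm_signedSum_zero_le L hw
    _ = 8 * (L * ‖1 - w‖) := by field_simp; ring
    _ ≤ 32 * (L * ‖1 - w‖) := by gcongr; norm_num

lemma norm_scaled_signedSum_two_mul_zero_mul_le (hz : ‖z‖ ≤ 1) (hw : ‖w‖ ≤ 1) :
    ‖((L : ℂ) ^ 4)⁻¹ * (signedSum L 2 z * signedSum L 0 w)‖ * (L * ‖1 - w‖) ≤ 32 := by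
  rcases eq_or_ne L 0 with rfl | hL
  · simp
  calc ‖((L : ℂ) ^ 4)⁻¹ * (signedSum L 2 z * signedSum L 0 w)‖ * (L * ‖1 - w‖)
      = ((L : ℝ) ^ 4)⁻¹ * L * (‖signedSum L 2 z‖ * (‖signedSum L 0 w‖ * ‖1 - w‖)) := by
        rw [norm_mul, norm_mul, norm_inv, norm_pow, Complex.norm_natCast]; ring
    _ ≤ ((L : ℝ) ^ 4)⁻¹ * L * ((2 * L) ^ 3 * 4) := by
        gcongr
        · exact norm_signedSum_le L 2 hz
        · exact norm_signedSum_zero_mul_le L hw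
    _ = 32 := by field_simp; ring

lemma norm_eval_dyadicPoly_two_zero_le (N : ℕ) (hz : ‖z‖ ≤ 1) (hw : ‖w‖ ≤ 1) :
    ‖eval ![z, w] (dyadicPoly N 2 0)‖ ≤ 192 := by
  rw [eval_dyadicPoly]
  refine (norm_sum_le _ _).trans ?_
  refine (sum_le_of_dyadic_bounds (K := 32) (norm_nonneg (1 - w)) (fun _ => norm_nonneg _)
    (fun s => ?_) (fun s => ?_) N).trans (by norm_num)
  · simpa using norm_scaled_signedSum_two_mul_zero_le (L := 2 ^ s) hz hw
  · simpa using norm_scaled_signedSum_two_mul_zero_mul_le (L := 2 ^ s) hz hw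

end Construction

lemma ADnorm_dyadicPoly_two_zero_le (N : ℕ) : ADnorm (dyadicPoly N 2 0) ≤ 192 :=
  ADnorm_le (by norm_num) fun _ _ hz hw => norm_eval_dyadicPoly_two_zero_le N hz hw

lemma ADnorm_dyadicPoly_zero_two_le (N : ℕ) : ADnorm (dyadicPoly N 0 2) ≤ 192 :=
  ADnorm_le (by norm_num) fun z w hz hw => by
    rw [eval_dyadicPoly_swap]; exact norm_eval_dyadicPoly_two_zero_le N hw hz

lemma natCast_le_ADnorm_dyadicPoly_one_one (N : ℕ) : (N : ℝ) ≤ ADnorm (dyadicPoly N 1 1) := by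
  simpa [eval_one_one_dyadicPoly_one_one] using
    norm_eval_le_ADnorm (dyadicPoly N 1 1) (z := 1) (w := 1) (by simp) (by simp)

/-- For every `c > 0` there is a polynomial `F` in two complex variables with
`‖(z₁∂₁)²F‖_{A(D²)} ≤ 1`, `‖(z₂∂₂)²F‖_{A(D²)} ≤ 1` but
`‖z₂∂₂(z₁∂₁)F‖_{A(D²)} ≥ c`. -/
theorem stmt_1 :
    ∀ c : ℝ, 0 < c →
      ∃ F : MvPolynomial (Fin 2) ℂ,
        ADnorm (euler1 (euler1 F)) ≤ 1 ∧
        ADnorm (euler2 (euler2 F)) ≤ 1 ∧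
        c ≤ ADnorm (euler2 (euler1 F)) := by
  intro c _
  set N := ⌈192 * c⌉₊
  refine ⟨C (192 : ℂ)⁻¹ * dyadicPoly N 0 0, ?_, ?_, ?_⟩ <;>
    simp only [euler1_C_mul, euler2_C_mul, euler1_dyadicPoly, euler2_dyadicPoly, ADnorm_C_mul,
      norm_inv, Complex.norm_ofNat, zero_add, Nat.reduceAdd]
  · linarith [ADnorm_dyadicPoly_two_zero_le N]
  · linarith [ADnorm_dyadicPoly_zero_two_le N]
  · linarith [Nat.le_ceil (192 * c), natCast_le_ADnorm_dyadicPoly_one_one N]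
end

section
/- Let n₀, n₁, …, n_N ∈ ℕ² and let a₀, a₁, …, a_N be complex numbers. Define functions on the distinguished boundary {(z₁,z₂) ∈ ℂ² : |z₁| = |z₂| = 1} by p₀(z) = a₀ z^{n₀}, q₀(z) = 1, and recursively p_k(z) = p_{k−1}(z) + a_k z^{n_k} q_{k−1}(z^{−1}), q_k(z) = q_{k−1}(z) − conj(a_k) z^{n_k} p_{k−1}(z^{−1}), where z^{n} = z₁^{n_1} z₂^{n_2} and z^{−1} = (z₁^{−1}, z₂^{−1}). Then for every z with |z₁| = |z₂| = 1, |p_N(z)|² + |q_N(z̄)|² = Π_{k=0}^{N} (1 + |a_k|²), where z̄ = (conj(z₁), conj(z₂)). -/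
open scoped ComplexConjugate

/-!
For `‖w‖ = 1` the step `(A, B) ↦ (A + a w B, B - ā w̄ A)` is `√(1 + |a|²)` times a unitary map,
so it multiplies `|A|² + |B|²` by `1 + |a|²`. On the torus `z⁻¹ = z̄`, so the pair
`(p_k(z), q_k(z̄))` is obtained from `(p_{k-1}(z), q_{k-1}(z̄))` by exactly this step with
`w = z^{n_k}`, and the identity follows by induction on `N`.
-/

theorem Complex.sq_norm_add_sq_norm_of_unitary_step (A B a w : ℂ) (hw : ‖w‖ = 1) :
    ‖A + a * w * B‖ ^ 2 + ‖B - conj a * conj w * A‖ ^ 2 =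
      (1 + ‖a‖ ^ 2) * (‖A‖ ^ 2 + ‖B‖ ^ 2) := by
  have hw' : w * conj w = 1 := by simp [Complex.mul_conj', hw]
  apply Complex.ofReal_injective
  push_cast
  simp only [← Complex.mul_conj', map_add, map_sub, map_mul, Complex.conj_conj]
  linear_combination (a * conj a * (A * conj A + B * conj B)) * hw'

theorem Complex.norm_pow_mul_pow_of_norm_eq_one {z₁ z₂ : ℂ} (h₁ : ‖z₁‖ = 1) (h₂ : ‖z₂‖ = 1)
    (m k : ℕ) : ‖z₁ ^ m * z₂ ^ k‖ = 1 := by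
  simp [h₁, h₂]

/-- Rudin–Shapiro identity on the two–dimensional torus: if `p_k`, `q_k` are the
Rudin–Shapiro type functions built from frequencies `n_k ∈ ℕ²` and scalars `a_k`, then for
`|z₁| = |z₂| = 1` one has `|p_N(z)|² + |q_N(z̄)|² = ∏_{k=0}^{N} (1 + |a_k|²)`. -/
theorem stmt_6 (N : ℕ) (n : ℕ → ℕ × ℕ) (a : ℕ → ℂ)
    (p q : ℕ → ℂ → ℂ → ℂ)
    (hp0 : ∀ z₁ z₂ : ℂ, ‖z₁‖ = 1 → ‖z₂‖ = 1 →
      p 0 z₁ z₂ = a 0 * z₁ ^ (n 0).1 * z₂ ^ (n 0).2)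
    (hq0 : ∀ z₁ z₂ : ℂ, ‖z₁‖ = 1 → ‖z₂‖ = 1 → q 0 z₁ z₂ = 1)
    (hp : ∀ k : ℕ, ∀ z₁ z₂ : ℂ, ‖z₁‖ = 1 → ‖z₂‖ = 1 →
      p (k + 1) z₁ z₂ =
        p k z₁ z₂ + a (k + 1) * z₁ ^ (n (k + 1)).1 * z₂ ^ (n (k + 1)).2 * q k z₁⁻¹ z₂⁻¹)
    (hq : ∀ k : ℕ, ∀ z₁ z₂ : ℂ, ‖z₁‖ = 1 → ‖z₂‖ = 1 →
      q (k + 1) z₁ z₂ =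
        q k z₁ z₂ - conj (a (k + 1)) * z₁ ^ (n (k + 1)).1 * z₂ ^ (n (k + 1)).2 * p k z₁⁻¹ z₂⁻¹) :
    ∀ z₁ z₂ : ℂ, ‖z₁‖ = 1 → ‖z₂‖ = 1 →
      ‖p N z₁ z₂‖ ^ 2 + ‖q N (conj z₁) (conj z₂)‖ ^ 2 =
        ∏ k ∈ Finset.range (N + 1), (1 + ‖a k‖ ^ 2) := by
  intro z₁ z₂ h₁ h₂
  have h₁' : ‖conj z₁‖ = 1 := (Complex.norm_conj z₁).trans h₁
  have h₂' : ‖conj z₂‖ = 1 := (Complex.norm_conj z₂).trans h₂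
  induction N with
  | zero =>
    rw [hp0 z₁ z₂ h₁ h₂, hq0 _ _ h₁' h₂']
    simp [h₁, h₂, add_comm]
  | succ N ih =>
    have hconj (m k : ℕ) : conj z₁ ^ m * conj z₂ ^ k = conj (z₁ ^ m * z₂ ^ k) := by simp
    rw [hp N z₁ z₂ h₁ h₂, hq N _ _ h₁' h₂', Complex.inv_eq_conj h₁, Complex.inv_eq_conj h₂,
      Complex.inv_eq_conj h₁', Complex.inv_eq_conj h₂', Complex.conj_conj, Complex.conj_conj,
      mul_assoc (a _), mul_assoc (conj (a _)), hconj,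
      Complex.sq_norm_add_sq_norm_of_unitary_step _ _ _ _
        (Complex.norm_pow_mul_pow_of_norm_eq_one h₁ h₂ _ _),
      ih, Finset.prod_range_succ _ (N + 1), mul_comm]
end

section
/- There do not exist finite complex Borel measures μ and ν on the torus T^2 such that for every pair of nonnegative integers (n,m) ≠ (0,0), n·m = n² · μ̂(n,m) + m² · ν̂(n,m), where μ̂(n,m) = ∫_{T²} e^{−i(nx+my)} dμ(x,y) is the Fourier coefficient of μ. -/
/-!
Averaging the relation along the ray `(k p, k q)`, `k ≥ 1`, and using that the Cesàro means of
`g ^ k` converge to the indicator of `{g = 1}` when `‖g‖ ≤ 1`, gives `p² μ(L) + q² ν(L) = p q`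
for the closed subgroup `L = {p x + q y = 0}` of `T²`. The subgroups `{n! (u x + v y) = 0}`
exhaust `Q = {u x + v y is torsion}`, so the same relation holds for `Q`. For non-proportional
`(u, v)` these sets `Q` meet only in the torsion subgroup `R` of `T²`; along slopes
`v / u → t` the sets `Q \ R` are disjoint, so their measures tend to `0`, and dividing by `u²`
gives `μ(R) + t² ν(R) = t` for every `t ∈ ℕ`, which is impossible for `t = 1, 2, 3`.
-/

open MeasureTheory Real

/-- The two-dimensional torus `(ℝ/2πℤ)²`. -/
abbrev T2 : Type := AddCircle (2 * π) × AddCircle (2 * π)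

/-- The `(n,m)`-th Fourier coefficient `∫ e^{-i(nx+my)} dμ` of the finite complex Borel
measure `μ = μ₁ - μ₂ + i(μ₃ - μ₄)` given through its decomposition into four finite
(nonnegative) measures. -/
noncomputable def cFourierCoef (μ₁ μ₂ μ₃ μ₄ : Measure T2) (n m : ℤ) : ℂ :=
  (∫ z, (fourier (-n) z.1 : ℂ) * (fourier (-m) z.2 : ℂ) ∂μ₁) -
  (∫ z, (fourier (-n) z.1 : ℂ) * (fourier (-m) z.2 : ℂ) ∂μ₂) +
  Complex.I * ((∫ z, (fourier (-n) z.1 : ℂ) * (fourier (-m) z.2 : ℂ) ∂μ₃) -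
    (∫ z, (fourier (-n) z.1 : ℂ) * (fourier (-m) z.2 : ℂ) ∂μ₄))

open Filter Topology Complex Finset
open scoped Nat

section ComplexCombination

variable {α : Type*} [MeasurableSpace α] (μ₁ μ₂ μ₃ μ₄ : Measure α)

/-- A quantity depending on a measure, evaluated at the complex measure `μ₁ - μ₂ + i (μ₃ - μ₄)`
by linearity. -/
noncomputable def complexComb : (Measure α → ℂ) →ₗ[ℂ] ℂ :=
  let ev (ρ : Measure α) : (Measure α → ℂ) →ₗ[ℂ] ℂ := LinearMap.proj ρ
  ev μ₁ - ev μ₂ + I • (ev μ₃ - ev μ₄)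

lemma complexComb_apply (f : Measure α → ℂ) :
    complexComb μ₁ μ₂ μ₃ μ₄ f = f μ₁ - f μ₂ + I * (f μ₃ - f μ₄) := by
  simp [complexComb]

noncomputable def cMeasure (s : Set α) : ℂ :=
  complexComb μ₁ μ₂ μ₃ μ₄ fun ρ => (ρ.real s : ℂ)

variable [IsFiniteMeasure μ₁] [IsFiniteMeasure μ₂] [IsFiniteMeasure μ₃]
  [IsFiniteMeasure μ₄]

lemma tendsto_complexComb {ι : Type*} {l : Filter ι} {F : ι → Measure α → ℂ}
    {G : Measure α → ℂ}
    (h : ∀ (ρ : Measure α) [IsFiniteMeasure ρ], Tendsto (fun i => F i ρ) l (𝓝 (G ρ))) :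
    Tendsto (fun i => complexComb μ₁ μ₂ μ₃ μ₄ (F i)) l (𝓝 (complexComb μ₁ μ₂ μ₃ μ₄ G)) := by
  simp only [complexComb_apply]
  exact ((h μ₁).sub (h μ₂)).add (tendsto_const_nhds.mul ((h μ₃).sub (h μ₄)))

lemma complexComb_congr {f g : Measure α → ℂ}
    (h : ∀ (ρ : Measure α) [IsFiniteMeasure ρ], f ρ = g ρ) :
    complexComb μ₁ μ₂ μ₃ μ₄ f = complexComb μ₁ μ₂ μ₃ μ₄ g := by
  simp only [complexComb_apply, h]

lemma cMeasure_eq_add_sdiff {s t : Set α} (ht : MeasurableSet t) (hts : t ⊆ s) :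
    cMeasure μ₁ μ₂ μ₃ μ₄ s = cMeasure μ₁ μ₂ μ₃ μ₄ t + cMeasure μ₁ μ₂ μ₃ μ₄ (s \ t) := by
  rw [cMeasure, cMeasure, cMeasure, ← map_add]
  refine complexComb_congr μ₁ μ₂ μ₃ μ₄ fun ρ _ => ?_
  rw [Pi.add_apply, ← ofReal_add, measureReal_add_sdiff ht, Set.union_eq_self_of_subset_left hts]

lemma tendsto_cMeasure_iUnion_atTop {s : ℕ → Set α} (hs : Monotone s) :
    Tendsto (fun n => cMeasure μ₁ μ₂ μ₃ μ₄ (s n)) atTop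
      (𝓝 (cMeasure μ₁ μ₂ μ₃ μ₄ (⋃ n, s n))) :=
  tendsto_complexComb μ₁ μ₂ μ₃ μ₄ fun ρ _ => (continuous_ofReal.tendsto _).comp <|
    (ENNReal.tendsto_toReal (measure_ne_top ρ _)).comp (tendsto_measure_iUnion_atTop hs)

lemma tendsto_cMeasure_zero_of_pairwise_disjoint {s : ℕ → Set α} (hs : ∀ n, MeasurableSet (s n))
    (hd : Pairwise (Function.onFun Disjoint s)) :
    Tendsto (fun n => cMeasure μ₁ μ₂ μ₃ μ₄ (s n)) atTop (𝓝 0) := by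
  rw [← map_zero (complexComb μ₁ μ₂ μ₃ μ₄)]
  refine tendsto_complexComb μ₁ μ₂ μ₃ μ₄ fun ρ _ => ?_
  have hsum : ∑' n, ρ (s n) ≠ ⊤ := by
    rw [← measure_iUnion hd hs]
    exact measure_ne_top ρ _
  simpa [Function.comp_def, measureReal_def] using (continuous_ofReal.tendsto _).comp <|
    (ENNReal.tendsto_toReal ENNReal.zero_ne_top).comp
      (ENNReal.tendsto_atTop_zero_of_tsum_ne_top hsum)

end ComplexCombination

section Cesaro

lemma norm_sum_pow_succ_le_two_div {z : ℂ} (hz : ‖z‖ ≤ 1) (hz1 : z ≠ 1) (N : ℕ) :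
    ‖∑ k ∈ range N, z ^ (k + 1)‖ ≤ 2 / ‖z - 1‖ := by
  have hgeom : ∑ k ∈ range N, z ^ (k + 1) = z * ((z ^ N - 1) / (z - 1)) := by
    simp only [← geom_sum_eq hz1, mul_sum, pow_succ']
  have hnum : ‖z ^ N - 1‖ ≤ 2 := by
    calc ‖z ^ N - 1‖ ≤ ‖z‖ ^ N + ‖(1 : ℂ)‖ := by
          simpa only [norm_pow] using norm_sub_le (z ^ N) 1
      _ ≤ 2 := by
          rw [norm_one]
          linarith [pow_le_one₀ (norm_nonneg z) hz (n := N)]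
  rw [hgeom, norm_mul, norm_div]
  calc ‖z‖ * (‖z ^ N - 1‖ / ‖z - 1‖) ≤ 1 * (2 / ‖z - 1‖) := by gcongr
    _ = 2 / ‖z - 1‖ := one_mul _

lemma norm_cesaro_pow_succ_le_one {z : ℂ} (hz : ‖z‖ ≤ 1) (N : ℕ) :
    ‖(N : ℂ)⁻¹ * ∑ k ∈ range N, z ^ (k + 1)‖ ≤ 1 := by
  have hsum : ‖∑ k ∈ range N, z ^ (k + 1)‖ ≤ N := by
    simpa using norm_sum_le_of_le (range N) (n := fun _ => (1 : ℝ)) fun k _ => by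
      simpa only [norm_pow] using pow_le_one₀ (norm_nonneg z) hz (n := k + 1)
  rw [norm_mul, norm_inv, Complex.norm_natCast]
  exact inv_mul_le_one_of_le₀ hsum (Nat.cast_nonneg N)

lemma tendsto_cesaro_pow_succ {z : ℂ} (hz : ‖z‖ ≤ 1) :
    Tendsto (fun N : ℕ => (N : ℂ)⁻¹ * ∑ k ∈ range N, z ^ (k + 1)) atTop
      (𝓝 (if z = 1 then 1 else 0)) := by
  split_ifs with hz1
  · refine tendsto_const_nhds.congr' ?_
    filter_upwards [eventually_ne_atTop 0] with N hN
    simp [hz1, hN]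
  · rw [tendsto_zero_iff_norm_tendsto_zero]
    refine squeeze_zero (fun _ => norm_nonneg _) (fun N => ?_)
      (by simpa using (tendsto_inv_atTop_nhds_zero_nat (𝕜 := ℝ)).mul_const (2 / ‖z - 1‖))
    rw [norm_mul, norm_inv, Complex.norm_natCast]
    gcongr
    exact norm_sum_pow_succ_le_two_div hz hz1 N

lemma tendsto_cesaro_integral_pow_succ {X : Type*} [MeasurableSpace X] (ρ : Measure X)
    [IsFiniteMeasure ρ] {g : X → ℂ} (hg : Measurable g) (hg1 : ∀ x, ‖g x‖ ≤ 1) :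
    Tendsto (fun N : ℕ => (N : ℂ)⁻¹ * ∑ k ∈ range N, ∫ x, g x ^ (k + 1) ∂ρ) atTop
      (𝓝 (ρ.real {x | g x = 1} : ℂ)) := by
  have hint (k : ℕ) : Integrable (fun x => g x ^ (k + 1)) ρ :=
    .of_bound (hg.pow_const _).aestronglyMeasurable 1 <| .of_forall fun x => by
      simpa only [norm_pow] using pow_le_one₀ (norm_nonneg _) (hg1 x)
  have hlim : Tendsto (fun N : ℕ => ∫ x, (N : ℂ)⁻¹ * ∑ k ∈ range N, g x ^ (k + 1) ∂ρ) atTop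
      (𝓝 (∫ x, {x | g x = 1}.indicator (fun _ => (1 : ℂ)) x ∂ρ)) := by
    refine tendsto_integral_of_dominated_convergence (fun _ => 1)
      (fun N => Measurable.aestronglyMeasurable (by fun_prop)) (integrable_const _)
      (fun N => .of_forall fun x => norm_cesaro_pow_succ_le_one (hg1 x) N)
      (.of_forall fun x => ?_)
    simpa [Set.indicator_apply] using tendsto_cesaro_pow_succ (hg1 x)
  rw [integral_indicator_const _ (measurableSet_eq_fun hg measurable_const), real_smul,
    mul_one] at hlim
  refine hlim.congr fun N => ?_
  rw [integral_const_mul, integral_finsetSum _ fun k _ => hint k]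

end Cesaro

section Torsion

lemma IsOfFinAddOrder.of_zsmul {G : Type*} [AddGroup G] {x : G} {n : ℤ}
    (h : IsOfFinAddOrder (n • x)) (hn : n ≠ 0) : IsOfFinAddOrder x := by
  obtain ⟨m, rfl | rfl⟩ := Int.eq_nat_or_neg n
  · rw [natCast_zsmul] at h
    exact h.of_nsmul (by omega)
  · rw [neg_zsmul, isOfFinAddOrder_neg_iff, natCast_zsmul] at h
    exact h.of_nsmul (by omega)

lemma isOfFinAddOrder_prod_of_det_ne_zero {G : Type*} [AddCommGroup G] {x y : G} {a b c d : ℤ}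
    (hdet : a * d - b * c ≠ 0) (h₁ : IsOfFinAddOrder (a • x + b • y))
    (h₂ : IsOfFinAddOrder (c • x + d • y)) : IsOfFinAddOrder (x, y) := by
  have hx : (a * d - b * c) • x = d • (a • x + b • y) - b • (c • x + d • y) := by module
  have hy : (a * d - b * c) • y = a • (c • x + d • y) - c • (a • x + b • y) := by module
  refine .prod_mk (.of_zsmul ?_ hdet) (.of_zsmul ?_ hdet)
  · rw [hx, sub_eq_add_neg]
    exact h₁.zsmul.add h₂.zsmul.neg
  · rw [hy, sub_eq_add_neg]
    exact h₂.zsmul.add h₁.zsmul.neg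

variable {X M : Type*} [AddMonoid M]

lemma setOf_isOfFinAddOrder_eq_iUnion (f : X → M) :
    {x | IsOfFinAddOrder (f x)} = ⋃ n : ℕ, {x | n ! • f x = 0} := by
  ext x
  simp only [Set.mem_ofPred_eq, Set.mem_iUnion]
  constructor
  · intro hx
    obtain ⟨n, hn, hnx⟩ := hx.exists_nsmul_eq_zero
    obtain ⟨c, hc⟩ := Nat.dvd_factorial hn le_rfl
    exact ⟨n, by rw [hc, mul_nsmul, hnx, nsmul_zero]⟩
  · rintro ⟨n, hn⟩
    exact isOfFinAddOrder_iff_nsmul_eq_zero.2 ⟨n !, n.factorial_pos, hn⟩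

lemma monotone_setOf_factorial_nsmul_eq_zero (f : X → M) :
    Monotone fun n : ℕ => {x | n ! • f x = 0} := by
  refine monotone_nat_of_le_succ fun n x (hx : n ! • f x = 0) => ?_
  show (n + 1)! • f x = 0
  rw [Nat.factorial_succ, mul_comm, mul_nsmul, hx, nsmul_zero]

lemma measurableSet_setOf_isOfFinAddOrder [TopologicalSpace X] [MeasurableSpace X]
    [OpensMeasurableSpace X] [TopologicalSpace M] [ContinuousAdd M] [T1Space M] {f : X → M}
    (hf : Continuous f) : MeasurableSet {x | IsOfFinAddOrder (f x)} := by
  rw [setOf_isOfFinAddOrder_eq_iUnion]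
  exact .iUnion fun n => (isClosed_singleton.preimage (hf.nsmul _)).measurableSet

end Torsion

lemma sq_mul_add_sq_mul_eq_mul_of_mul_left {K : Type*} [Field K] {c x y A B : K} (hc : c ≠ 0)
    (h : (c * x) ^ 2 * A + (c * y) ^ 2 * B = c * x * (c * y)) :
    x ^ 2 * A + y ^ 2 * B = x * y :=
  mul_left_cancel₀ (pow_ne_zero 2 hc) (by linear_combination h)

section ProductGroup

variable {G : Type*} [AddCommGroup G] [MeasurableSpace (G × G)]
  {μ₁ μ₂ μ₃ μ₄ ν₁ ν₂ ν₃ ν₄ : Measure (G × G)} [IsFiniteMeasure μ₁] [IsFiniteMeasure μ₂]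
  [IsFiniteMeasure μ₃] [IsFiniteMeasure μ₄] [IsFiniteMeasure ν₁] [IsFiniteMeasure ν₂]
  [IsFiniteMeasure ν₃] [IsFiniteMeasure ν₄]

lemma preimage_torsion_relation_of_kernel_relation
    (h : ∀ p q : ℕ, 0 < p →
      (p : ℂ) ^ 2 * cMeasure μ₁ μ₂ μ₃ μ₄ {z | (p : ℤ) • z.1 + (q : ℤ) • z.2 = 0} +
        (q : ℂ) ^ 2 * cMeasure ν₁ ν₂ ν₃ ν₄ {z | (p : ℤ) • z.1 + (q : ℤ) • z.2 = 0} = p * q)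
    (u v : ℕ) (hu : 0 < u) :
    (u : ℂ) ^ 2 * cMeasure μ₁ μ₂ μ₃ μ₄ {z | IsOfFinAddOrder ((u : ℤ) • z.1 + (v : ℤ) • z.2)} +
      (v : ℂ) ^ 2 * cMeasure ν₁ ν₂ ν₃ ν₄ {z | IsOfFinAddOrder ((u : ℤ) • z.1 + (v : ℤ) • z.2)} =
      u * v := by
  set f : G × G → G := fun z => (u : ℤ) • z.1 + (v : ℤ) • z.2
  have hmono := monotone_setOf_factorial_nsmul_eq_zero f
  have hlim :=
    ((tendsto_cMeasure_iUnion_atTop μ₁ μ₂ μ₃ μ₄ hmono).const_mul ((u : ℂ) ^ 2)).add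
      ((tendsto_cMeasure_iUnion_atTop ν₁ ν₂ ν₃ ν₄ hmono).const_mul ((v : ℂ) ^ 2))
  rw [← setOf_isOfFinAddOrder_eq_iUnion] at hlim
  refine tendsto_nhds_unique hlim (tendsto_const_nhds.congr fun n => ?_)
  have hker : {z | n ! • f z = 0} =
      {z : G × G | ((n ! * u : ℕ) : ℤ) • z.1 + ((n ! * v : ℕ) : ℤ) • z.2 = 0} := by
    ext z
    simp [f, smul_add, mul_smul]
  rw [hker]
  symm
  refine sq_mul_add_sq_mul_eq_mul_of_mul_left (c := (n ! : ℂ))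
    (Nat.cast_ne_zero.2 n.factorial_ne_zero) ?_
  simpa using h (n ! * u) (n ! * v) (Nat.mul_pos n.factorial_pos hu)

lemma torsion_relation_of_preimage_torsion_relation [TopologicalSpace G] [IsTopologicalAddGroup G] [T1Space G]
    [OpensMeasurableSpace (G × G)]
    (h : ∀ u v : ℕ, 0 < u →
      (u : ℂ) ^ 2 * cMeasure μ₁ μ₂ μ₃ μ₄ {z | IsOfFinAddOrder ((u : ℤ) • z.1 + (v : ℤ) • z.2)} +
        (v : ℂ) ^ 2 * cMeasure ν₁ ν₂ ν₃ ν₄ {z | IsOfFinAddOrder ((u : ℤ) • z.1 + (v : ℤ) • z.2)} =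
        u * v)
    (t : ℕ) :
    cMeasure μ₁ μ₂ μ₃ μ₄ {z : G × G | IsOfFinAddOrder z} +
      (t : ℂ) ^ 2 * cMeasure ν₁ ν₂ ν₃ ν₄ {z : G × G | IsOfFinAddOrder z} = t := by
  set R := {z : G × G | IsOfFinAddOrder z}
  set Q : ℕ → Set (G × G) := fun k =>
    {z | IsOfFinAddOrder (((k + 1 : ℕ) : ℤ) • z.1 + ((t * (k + 1) + 1 : ℕ) : ℤ) • z.2)}
  have hR : MeasurableSet R := measurableSet_setOf_isOfFinAddOrder continuous_id
  have hRQ (k : ℕ) : R ⊆ Q k := fun z hz => hz.fst.zsmul.add hz.snd.zsmul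
  have hmeas (k : ℕ) : MeasurableSet (Q k \ R) :=
    (measurableSet_setOf_isOfFinAddOrder (by fun_prop)).diff hR
  have hdisj : Pairwise (Function.onFun Disjoint fun k => Q k \ R) := by
    intro j k hjk
    refine Set.disjoint_left.2 fun z ⟨hj, hzR⟩ ⟨hk, _⟩ => hzR ?_
    refine isOfFinAddOrder_prod_of_det_ne_zero ?_ hj hk
    have : (j : ℤ) ≠ k := by exact_mod_cast hjk
    push_cast
    intro hdet
    exact this (by linear_combination hdet)
  -- the slope `v / u` of `Q k`
  set r : ℕ → ℂ := fun k => t + ((k : ℂ) + 1)⁻¹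
  have hr : Tendsto r atTop (𝓝 t) := by
    simpa using tendsto_const_nhds.add
      ((tendsto_inv_atTop_nhds_zero_nat (𝕜 := ℂ)).comp (tendsto_add_atTop_nat 1))
  have hk (k : ℕ) : (cMeasure μ₁ μ₂ μ₃ μ₄ R + cMeasure μ₁ μ₂ μ₃ μ₄ (Q k \ R)) +
      r k ^ 2 * (cMeasure ν₁ ν₂ ν₃ ν₄ R + cMeasure ν₁ ν₂ ν₃ ν₄ (Q k \ R)) = r k := by
    have hQ := h (k + 1) (t * (k + 1) + 1) k.succ_pos
    rw [cMeasure_eq_add_sdiff μ₁ μ₂ μ₃ μ₄ hR (hRQ k),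
      cMeasure_eq_add_sdiff ν₁ ν₂ ν₃ ν₄ hR (hRQ k)] at hQ
    have hv : ((t * (k + 1) + 1 : ℕ) : ℂ) = ((k : ℂ) + 1) * r k := by
      simp only [r]
      push_cast
      field_simp
    rw [hv, ← mul_one ((k + 1 : ℕ) : ℂ), Nat.cast_add_one] at hQ
    simpa using sq_mul_add_sq_mul_eq_mul_of_mul_left (Nat.cast_add_one_ne_zero k) hQ
  have hlim := ((tendsto_const_nhds (x := cMeasure μ₁ μ₂ μ₃ μ₄ R)).add
    (tendsto_cMeasure_zero_of_pairwise_disjoint μ₁ μ₂ μ₃ μ₄ hmeas hdisj)).add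
      ((hr.pow 2).mul ((tendsto_const_nhds (x := cMeasure ν₁ ν₂ ν₃ ν₄ R)).add
        (tendsto_cMeasure_zero_of_pairwise_disjoint ν₁ ν₂ ν₃ ν₄ hmeas hdisj)))
  simpa using tendsto_nhds_unique (hlim.congr hk) hr

end ProductGroup

section Torus

open AddCircle

lemma fourier_mul_fourier_eq_pow {T : ℝ} (k : ℕ) (a b : ℤ) (x y : AddCircle T) :
    (fourier (-(k * a)) x : ℂ) * fourier (-(k * b)) y =
      (fourier (-1) (a • x + b • y) : ℂ) ^ k := by
  simp only [fourier_apply, ← Circle.coe_pow, ← Circle.coe_mul, ← toCircle_add, ← toCircle_nsmul]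
  congr 2
  simp only [smul_add, ← natCast_zsmul, smul_smul]
  congr 1 <;> congr 1 <;> ring

lemma fourier_neg_one_eq_one_iff {T : ℝ} (hT : T ≠ 0) {x : AddCircle T} :
    (fourier (-1) x : ℂ) = 1 ↔ x = 0 := by
  rw [fourier_apply, Circle.coe_eq_one, neg_one_zsmul, ← toCircle_zero (T := T),
    (injective_toCircle hT).eq_iff, neg_eq_zero]

variable {μ₁ μ₂ μ₃ μ₄ ν₁ ν₂ ν₃ ν₄ : Measure T2} [IsFiniteMeasure μ₁] [IsFiniteMeasure μ₂]
  [IsFiniteMeasure μ₃] [IsFiniteMeasure μ₄] [IsFiniteMeasure ν₁] [IsFiniteMeasure ν₂]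
  [IsFiniteMeasure ν₃] [IsFiniteMeasure ν₄]

variable (μ₁ μ₂ μ₃ μ₄) in
lemma tendsto_cesaro_cFourierCoef (p q : ℕ) :
    Tendsto (fun N : ℕ => (N : ℂ)⁻¹ * ∑ k ∈ range N,
        cFourierCoef μ₁ μ₂ μ₃ μ₄ (((k + 1) * p : ℕ) : ℤ) (((k + 1) * q : ℕ) : ℤ)) atTop
      (𝓝 (cMeasure μ₁ μ₂ μ₃ μ₄ {z | (p : ℤ) • z.1 + (q : ℤ) • z.2 = 0})) := by
  set g : T2 → ℂ := fun z => fourier (-1) ((p : ℤ) • z.1 + (q : ℤ) • z.2)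
  have hg : Continuous g := (map_continuous _).comp (by fun_prop)
  have hcoef (k : ℕ) :
      cFourierCoef μ₁ μ₂ μ₃ μ₄ (((k + 1) * p : ℕ) : ℤ) (((k + 1) * q : ℕ) : ℤ) =
        complexComb μ₁ μ₂ μ₃ μ₄ fun ρ => ∫ z, g z ^ (k + 1) ∂ρ := by
    simp only [cFourierCoef, complexComb_apply, g, ← fourier_mul_fourier_eq_pow, Nat.cast_mul]
  have hset : {z : T2 | g z = 1} = {z | (p : ℤ) • z.1 + (q : ℤ) • z.2 = 0} := by
    ext z
    exact fourier_neg_one_eq_one_iff two_pi_pos.ne'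
  simp_rw [hcoef, ← map_sum, ← smul_eq_mul, ← map_smul]
  rw [cMeasure, ← hset]
  refine tendsto_complexComb μ₁ μ₂ μ₃ μ₄ fun ρ _ => ?_
  simpa [Finset.sum_apply] using tendsto_cesaro_integral_pow_succ ρ hg.measurable
    fun z => (by simp only [g, fourier_apply, Circle.norm_coe] : ‖g z‖ = 1).le

lemma kernel_relation_of_fourier
    (h : ∀ n m : ℕ, (n, m) ≠ (0, 0) →
      ((n : ℂ) * (m : ℂ)) =
        (n : ℂ) ^ 2 * cFourierCoef μ₁ μ₂ μ₃ μ₄ (n : ℤ) (m : ℤ) +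
        (m : ℂ) ^ 2 * cFourierCoef ν₁ ν₂ ν₃ ν₄ (n : ℤ) (m : ℤ))
    (p q : ℕ) (hp : 0 < p) :
    (p : ℂ) ^ 2 * cMeasure μ₁ μ₂ μ₃ μ₄ {z | (p : ℤ) • z.1 + (q : ℤ) • z.2 = 0} +
      (q : ℂ) ^ 2 * cMeasure ν₁ ν₂ ν₃ ν₄ {z | (p : ℤ) • z.1 + (q : ℤ) • z.2 = 0} = p * q := by
  set a := fun k : ℕ => cFourierCoef μ₁ μ₂ μ₃ μ₄ (((k + 1) * p : ℕ) : ℤ) (((k + 1) * q : ℕ) : ℤ)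
  set b := fun k : ℕ => cFourierCoef ν₁ ν₂ ν₃ ν₄ (((k + 1) * p : ℕ) : ℤ) (((k + 1) * q : ℕ) : ℤ)
  have hray (k : ℕ) : (p : ℂ) ^ 2 * a k + (q : ℂ) ^ 2 * b k = p * q := by
    refine sq_mul_add_sq_mul_eq_mul_of_mul_left (Nat.cast_add_one_ne_zero k) ?_
    have hk := h ((k + 1) * p) ((k + 1) * q) (by simp [hp.ne'])
    push_cast at hk
    exact hk.symm
  have hlim := ((tendsto_cesaro_cFourierCoef μ₁ μ₂ μ₃ μ₄ p q).const_mul ((p : ℂ) ^ 2)).add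
    ((tendsto_cesaro_cFourierCoef ν₁ ν₂ ν₃ ν₄ p q).const_mul ((q : ℂ) ^ 2))
  refine tendsto_nhds_unique hlim (tendsto_const_nhds.congr' ?_)
  filter_upwards [eventually_ne_atTop 0] with N hN
  calc (p * q : ℂ) = (N : ℂ)⁻¹ * ∑ k ∈ range N, ((p : ℂ) ^ 2 * a k + (q : ℂ) ^ 2 * b k) := by
        simp [hray, hN]
    _ = _ := by
        rw [sum_add_distrib, ← mul_sum, ← mul_sum]
        ring

end Torus

/-- There are no finite complex Borel measures `μ`, `ν` on the torus `T²` (represented as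
`μ = μ₁ - μ₂ + i(μ₃ - μ₄)` and `ν = ν₁ - ν₂ + i(ν₃ - ν₄)` with the `μⱼ`, `νⱼ` finite
nonnegative measures) such that `n·m = n²·μ̂(n,m) + m²·ν̂(n,m)` for all nonnegative
integers `(n,m) ≠ (0,0)`. -/
theorem stmt_8 :
    ¬ ∃ μ₁ μ₂ μ₃ μ₄ ν₁ ν₂ ν₃ ν₄ : Measure T2,
      IsFiniteMeasure μ₁ ∧ IsFiniteMeasure μ₂ ∧ IsFiniteMeasure μ₃ ∧ IsFiniteMeasure μ₄ ∧
      IsFiniteMeasure ν₁ ∧ IsFiniteMeasure ν₂ ∧ IsFiniteMeasure ν₃ ∧ IsFiniteMeasure ν₄ ∧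
      ∀ n m : ℕ, (n, m) ≠ (0, 0) →
        ((n : ℂ) * (m : ℂ)) =
          (n : ℂ) ^ 2 * cFourierCoef μ₁ μ₂ μ₃ μ₄ (n : ℤ) (m : ℤ) +
          (m : ℂ) ^ 2 * cFourierCoef ν₁ ν₂ ν₃ ν₄ (n : ℤ) (m : ℤ) := by
  rintro ⟨μ₁, μ₂, μ₃, μ₄, ν₁, ν₂, ν₃, ν₄, _, _, _, _, _, _, _, _, h⟩
  have htorsion :=
    torsion_relation_of_preimage_torsion_relation (preimage_torsion_relation_of_kernel_relation (kernel_relation_of_fourier h))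
  have h₁ := htorsion 1
  have h₂ := htorsion 2
  have h₃ := htorsion 3
  push_cast at h₁ h₂ h₃
  have : (2 : ℂ) = 0 := by linear_combination 5 * h₁ - 8 * h₂ + 3 * h₃
  norm_num at this
end

section
/- Let a₀, a₁, …, a_N be complex numbers, and let p_k, q_k be the Rudin–Shapiro type sequences defined by the recursion p₀(z) = a₀ z^{n₀}, q₀ = 1, p_k(z) = p_{k−1}(z) + a_k z^{n_k} q_{k−1}(z^{−1}), q_k(z) = q_{k−1}(z) − conj(a_k) z^{n_k} p_{k−1}(z^{−1}) for some frequency vectors n_k ∈ ℕ² (the values p_k(1,1) and q_k(1,1) do not depend on the choice of the n_k). Then, with the convention q_{−1} = 1, p_{−1} = 0, there exists a subset A ⊆ {0, 1, …, N} such that |Σ_{k∈A} a_k q_{k−1}(1,1)| + |Σ_{k∈A} conj(a_k) p_{k−1}(1,1)| ≥ (1/(2π)) · Σ_{k=0}^{N} |a_k| · Π_{j=0}^{k−1} (1 + |a_j|²)^{1/2} (empty products equal 1). -/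
open scoped Real ComplexConjugate

/-!
For any direction `θ`, the terms `w k` whose rotation `e^{iθ} w k` has nonnegative real part
sum to a vector of norm at least `∑ₖ max (Re (e^{iθ} w k)) 0`. Averaging over `θ ∈ [0, 2π]`,
each term contributes `2 ‖w k‖ / (2π)`, so some direction yields `π⁻¹ ∑ₖ ‖w k‖`. Applied to
whichever of `a_k q_{k-1}(1,1)` and `conj (a_k) p_{k-1}(1,1)` has the larger total norm, this
gives the theorem, because `|p_{k-1}(1,1)| + |q_{k-1}(1,1)|` dominates
`(|p_{k-1}(1,1)|² + |q_{k-1}(1,1)|²)^{1/2} = ∏_{j<k} (1 + |a_j|²)^{1/2}`.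
-/

/-- `shiftedQ Q k = q_{k-1}(1,1)` with the convention `q_{-1} = 1`. -/
def shiftedQ (Q : ℕ → ℂ) : ℕ → ℂ
  | 0 => 1
  | k + 1 => Q k

/-- `shiftedP P k = p_{k-1}(1,1)` with the convention `p_{-1} = 0`. -/
def shiftedP (P : ℕ → ℂ) : ℕ → ℂ
  | 0 => 0
  | k + 1 => P k

open Complex Finset

lemma integral_max_cos_add_zero (α : ℝ) :
    ∫ θ in (0 : ℝ)..2 * π, max (Real.cos (θ + α)) 0 = 2 := by
  set g : ℝ → ℝ := fun θ => max (Real.cos θ) 0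
  have hg : Continuous g := Real.continuous_cos.max continuous_const
  have hper : Function.Periodic g (2 * π) := fun θ => by simp [g, Real.cos_add_two_pi]
  have hpos : ∫ θ in -(π / 2)..π / 2, g θ = 2 := by
    rw [intervalIntegral.integral_congr (g := Real.cos) fun θ hθ => max_eq_left <|
      Real.cos_nonneg_of_mem_Icc <| by rwa [Set.uIcc_of_le (by linarith [Real.pi_pos])] at hθ]
    norm_num
  have hneg : ∫ θ in π / 2..-(π / 2) + 2 * π, g θ = 0 := by
    rw [intervalIntegral.integral_congr (g := fun _ => (0 : ℝ)) fun θ hθ => by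
      rw [Set.uIcc_of_le (by linarith [Real.pi_pos])] at hθ
      exact max_eq_right (Real.cos_nonpos_of_pi_div_two_le_of_le hθ.1 (by linarith [hθ.2]))]
    simp
  calc ∫ θ in (0 : ℝ)..2 * π, g (θ + α)
      = ∫ θ in α..α + 2 * π, g θ := by
        rw [intervalIntegral.integral_comp_add_right, zero_add, add_comm]
    _ = ∫ θ in -(π / 2)..-(π / 2) + 2 * π, g θ := hper.intervalIntegral_add_eq α _
    _ = 2 := by
        rw [← intervalIntegral.integral_add_adjacent_intervals (hg.intervalIntegrable _ _)
          (hg.intervalIntegrable _ _), hpos, hneg, add_zero]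

lemma re_exp_mul_I_mul (θ : ℝ) (w : ℂ) :
    (exp (θ * I) * w).re = ‖w‖ * Real.cos (θ + arg w) := by
  conv_lhs => rw [← norm_mul_exp_arg_mul_I w]
  rw [mul_left_comm, ← exp_add, ← add_mul, ← ofReal_add, re_ofReal_mul, exp_ofReal_mul_I_re]

lemma integral_max_re_exp_mul_I_mul (w : ℂ) :
    ∫ θ in (0 : ℝ)..2 * π, max (exp (θ * I) * w).re 0 = 2 * ‖w‖ := by
  have h (θ : ℝ) : max (exp (θ * I) * w).re 0 = ‖w‖ * max (Real.cos (θ + arg w)) 0 := by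
    rw [re_exp_mul_I_mul, mul_max_of_nonneg _ _ (norm_nonneg w), mul_zero]
  simp_rw [h]
  rw [intervalIntegral.integral_const_mul, integral_max_cos_add_zero, mul_comm]

lemma sum_max_re_mul_le_norm_sum_filter {ι : Type*} (s : Finset ι) (w : ι → ℂ) (z : ℂ) :
    ∑ k ∈ s, max (z * w k).re 0 ≤ ‖z‖ * ‖∑ k ∈ s with 0 ≤ (z * w k).re, w k‖ := by
  calc ∑ k ∈ s, max (z * w k).re 0
      = (z * ∑ k ∈ s with 0 ≤ (z * w k).re, w k).re := by
        rw [mul_sum, re_sum, sum_filter]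
        exact sum_congr rfl fun k _ => by
          split_ifs with h
          exacts [max_eq_left h, max_eq_right (le_of_not_ge h)]
    _ ≤ ‖z‖ * ‖∑ k ∈ s with 0 ≤ (z * w k).re, w k‖ := (re_le_norm _).trans (norm_mul _ _).le

theorem Finset.exists_subset_inv_pi_mul_sum_norm_le_norm_sum {ι : Type*} (s : Finset ι)
    (w : ι → ℂ) : ∃ A ⊆ s, π⁻¹ * ∑ k ∈ s, ‖w k‖ ≤ ‖∑ k ∈ A, w k‖ := by
  set F : ℝ → ℝ := fun θ => ∑ k ∈ s, max (exp (θ * I) * w k).re 0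
  have hF : Continuous F := by fun_prop
  have hintF : ∫ θ in (0 : ℝ)..2 * π, F θ = 2 * ∑ k ∈ s, ‖w k‖ := by
    rw [intervalIntegral.integral_finsetSum fun k _ =>
      Continuous.intervalIntegrable (by fun_prop) _ _, mul_sum]
    exact sum_congr rfl fun k _ => integral_max_re_exp_mul_I_mul (w k)
  obtain ⟨θ, -, hθ⟩ := isCompact_Icc.exists_isMaxOn (Set.nonempty_Icc.2 Real.two_pi_pos.le)
    hF.continuousOn
  have hmean : 2 * ∑ k ∈ s, ‖w k‖ ≤ 2 * π * F θ := by
    rw [← hintF]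
    simpa using intervalIntegral.integral_mono_on (μ := MeasureTheory.volume) Real.two_pi_pos.le
      (hF.intervalIntegrable _ _) intervalIntegrable_const fun x hx => hθ hx
  refine ⟨{k ∈ s | 0 ≤ (exp (θ * I) * w k).re}, filter_subset _ s, ?_⟩
  calc π⁻¹ * ∑ k ∈ s, ‖w k‖ ≤ F θ := by
        rw [inv_mul_le_iff₀ Real.pi_pos]; linarith
    _ ≤ _ := (sum_max_re_mul_le_norm_sum_filter s w _).trans_eq <| by
        rw [norm_exp_ofReal_mul_I, one_mul]

lemma Finset.exists_subset_sum_norm_add_le {ι : Type*} (s : Finset ι) (u v : ι → ℂ) :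
    ∃ A ⊆ s, (1 / (2 * π)) * ∑ k ∈ s, (‖u k‖ + ‖v k‖) ≤
      ‖∑ k ∈ A, u k‖ + ‖∑ k ∈ A, v k‖ := by
  wlog h : ∑ k ∈ s, ‖v k‖ ≤ ∑ k ∈ s, ‖u k‖ generalizing u v
  · obtain ⟨A, hA, hle⟩ := this v u (le_of_not_ge h)
    exact ⟨A, hA, by simpa only [add_comm] using hle⟩
  obtain ⟨A, hA, hu⟩ := s.exists_subset_inv_pi_mul_sum_norm_le_norm_sum u
  refine ⟨A, hA, ?_⟩
  calc (1 / (2 * π)) * ∑ k ∈ s, (‖u k‖ + ‖v k‖) ≤ π⁻¹ * ∑ k ∈ s, ‖u k‖ := by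
        rw [sum_add_distrib, one_div, mul_inv, mul_comm 2⁻¹, mul_assoc]
        gcongr
        linarith
    _ ≤ ‖∑ k ∈ A, u k‖ := hu
    _ ≤ ‖∑ k ∈ A, u k‖ + ‖∑ k ∈ A, v k‖ := le_add_of_nonneg_right (norm_nonneg _)

lemma normSq_add_mul_add_normSq_sub_conj_mul (x y c : ℂ) :
    normSq (x + c * y) + normSq (y - conj c * x) = (1 + normSq c) * (normSq x + normSq y) := by
  simp only [normSq_apply, add_re, add_im, sub_re, sub_im, mul_re, mul_im, conj_re, conj_im]
  ring

lemma normSq_shiftedP_add_normSq_shiftedQ {a P Q : ℕ → ℂ} (hP0 : P 0 = a 0) (hQ0 : Q 0 = 1)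
    (hP : ∀ k, P (k + 1) = P k + a (k + 1) * Q k)
    (hQ : ∀ k, Q (k + 1) = Q k - conj (a (k + 1)) * P k) (k : ℕ) :
    normSq (shiftedP P k) + normSq (shiftedQ Q k) = ∏ j ∈ range k, (1 + ‖a j‖ ^ 2) := by
  induction k with
  | zero => simp [shiftedP, shiftedQ]
  | succ k ih =>
    cases k with
    | zero => simp [shiftedP, shiftedQ, hP0, hQ0, Complex.sq_norm, add_comm]
    | succ k =>
      simp only [shiftedP, shiftedQ] at ih ⊢
      rw [hP, hQ, normSq_add_mul_add_normSq_sub_conj_mul, ih, prod_range_succ _ (k + 1),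
        Complex.sq_norm, mul_comm]

lemma norm_mul_sqrt_normSq_add_normSq_le (c x y : ℂ) :
    ‖c‖ * √(normSq x + normSq y) ≤ ‖c * y‖ + ‖conj c * x‖ := by
  rw [norm_mul, norm_mul, norm_conj, ← mul_add, ← Complex.sq_norm, ← Complex.sq_norm]
  gcongr
  rw [Real.sqrt_le_left (by positivity)]
  nlinarith [norm_nonneg x, norm_nonneg y]

/-- If `P k = p_k(1,1)` and `Q k = q_k(1,1)` are the values at `(1,1)` of the Rudin–Shapiro
type sequences built from scalars `a_k` (these values do not depend on the frequencies), then
there is a subset `A ⊆ {0,…,N}` with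
`|∑_{k∈A} a_k q_{k-1}(1,1)| + |∑_{k∈A} conj(a_k) p_{k-1}(1,1)|
  ≥ (1/(2π)) ∑_{k=0}^{N} |a_k| ∏_{j=0}^{k-1} (1+|a_j|²)^{1/2}`
(with the convention `q_{-1} = 1`, `p_{-1} = 0`; empty products equal `1`). -/
theorem stmt_14 (N : ℕ) (a : ℕ → ℂ) (P Q : ℕ → ℂ)
    (hP0 : P 0 = a 0) (hQ0 : Q 0 = 1)
    (hP : ∀ k : ℕ, P (k + 1) = P k + a (k + 1) * Q k)
    (hQ : ∀ k : ℕ, Q (k + 1) = Q k - conj (a (k + 1)) * P k) :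
    ∃ A ⊆ Finset.range (N + 1),
      (1 / (2 * π)) * ∑ k ∈ Finset.range (N + 1),
          ‖a k‖ * ∏ j ∈ Finset.range k, Real.sqrt (1 + ‖a j‖ ^ 2) ≤
        ‖∑ k ∈ A, a k * shiftedQ Q k‖ +
        ‖∑ k ∈ A, conj (a k) * shiftedP P k‖ := by
  obtain ⟨A, hA, hsum⟩ := (range (N + 1)).exists_subset_sum_norm_add_le
    (fun k => a k * shiftedQ Q k) (fun k => conj (a k) * shiftedP P k)
  refine ⟨A, hA, le_trans ?_ hsum⟩
  gcongr with k
  rw [← Real.sqrt_prod _ fun j _ => by positivity,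
    ← normSq_shiftedP_add_normSq_shiftedQ hP0 hQ0 hP hQ k]
  exact norm_mul_sqrt_normSq_add_normSq_le _ _ _
end
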